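/- arXiv:2210.14305 — 4 statements merged into one kernel-verified Lean document; each statement's English description precedes it below -/
import Mathlib

section
/- The equation v₋(a) = c₊(a), expressing that the free critical value of f_a equals the other critical point, is a nontrivial polynomial equation in a with exactly four solutions, of the form ±s₀ and ±conj(s₀) for some s₀ in the open first quadrant. -/
/-!
Eliminating the square root `s` turns `v₋(a) = c₊(a)` into `2a³ + (2a² - 15)s = 0`, and squaring
gives the biquadratic `8a⁴ - 45a² + 75 = 0`; conversely every root of the biquadratic yields
`s = -2a³/(2a² - 15)`. The biquadratic has the non-real conjugate roots
`a² = w, conj w` with `w = (45 + 5√15 i)/16`, and the square root of `w` in the first quadrant is `s₀`.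
-/

open Complex

theorem critical_value_eq_iff {K : Type*} [Field K] [CharZero K] (a : K) :
    (∃ s : K, s ^ 2 = a ^ 2 - 3 ∧
        ((-a - s) / 3) ^ 3 + a * ((-a - s) / 3) ^ 2 + (-a - s) / 3 = (-a + s) / 3) ↔
      8 * a ^ 4 - 45 * a ^ 2 + 75 = 0 := by
  constructor
  · rintro ⟨s, hs, hv⟩
    have hlin : 2 * a ^ 3 + (2 * a ^ 2 - 15) * s = 0 := by
      linear_combination 27 * hv + s * hs
    linear_combination
      (1 / 9) * ((2 * a ^ 3 - (2 * a ^ 2 - 15) * s) * hlin + (2 * a ^ 2 - 15) ^ 2 * hs)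
  · intro hq
    have hne : 2 * a ^ 2 - 15 ≠ 0 := by
      intro h
      have : (375 : K) = 0 := by linear_combination 2 * hq - (8 * a ^ 2 + 15) * h
      norm_num at this
    set s := -2 * a ^ 3 / (2 * a ^ 2 - 15) with hs_def
    have hs : s ^ 2 = a ^ 2 - 3 := by
      rw [hs_def]; field_simp; linear_combination 9 * hq
    have hlin : 2 * a ^ 3 + (2 * a ^ 2 - 15) * s = 0 := by
      rw [hs_def]; field_simp; ring
    exact ⟨s, hs, by linear_combination (1 / 27) * hlin - (s / 27) * hs⟩

theorem Complex.exists_sq_eq_re_pos_im_pos {w : ℂ} (hw : 0 < w.im) :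
    ∃ z : ℂ, z ^ 2 = w ∧ 0 < z.re ∧ 0 < z.im := by
  obtain ⟨z, hz⟩ := IsAlgClosed.exists_pow_nat_eq w two_pos
  have hprod : 0 < z.re * z.im := by
    have : (z ^ 2).im = 2 * (z.re * z.im) := by rw [sq, mul_im]; ring
    rw [hz] at this; linarith
  rcases pos_and_pos_or_neg_and_neg_of_mul_pos hprod with ⟨hre, him⟩ | ⟨hre, him⟩
  · exact ⟨z, hz, hre, him⟩
  · exact ⟨-z, by rw [neg_sq, hz], by simpa using hre, by simpa using him⟩

theorem quadratic_factor (z : ℂ) :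
    8 * z ^ 2 - 45 * z + 75 =
      8 * (z - (45 + 5 * Real.sqrt 15 * I) / 16) *
        (z - starRingEnd ℂ ((45 + 5 * Real.sqrt 15 * I) / 16)) := by
  have h15 : ((Real.sqrt 15 : ℝ) : ℂ) ^ 2 = 15 := by
    norm_cast; exact Real.sq_sqrt (by norm_num)
  simp only [map_div₀, map_add, map_mul, conj_ofReal, conj_I, map_ofNat]
  linear_combination (25 / 32) * (((Real.sqrt 15 : ℝ) : ℂ) ^ 2 * I_sq - h15)

theorem biquadratic_factor {s₀ : ℂ} (hs₀ : s₀ ^ 2 = (45 + 5 * Real.sqrt 15 * I) / 16) (a : ℂ) :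
    8 * a ^ 4 - 45 * a ^ 2 + 75 =
      8 * (a - s₀) * (a + s₀) * (a - starRingEnd ℂ s₀) * (a + starRingEnd ℂ s₀) := by
  have hconj : starRingEnd ℂ s₀ ^ 2 = starRingEnd ℂ ((45 + 5 * Real.sqrt 15 * I) / 16) := by
    rw [← map_pow, hs₀]
  linear_combination quadratic_factor (a ^ 2) + 8 * (a ^ 2 - starRingEnd ℂ s₀ ^ 2) * hs₀
    + 8 * (a ^ 2 - (45 + 5 * Real.sqrt 15 * I) / 16) * hconj

/-- The equation `v₋(a) = c₊(a)` (the free critical value of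
`f_a(z) = z^3 + a z^2 + z` equals the other critical point, the critical points
being `(-a ∓ s)/3` with `s^2 = a^2 - 3`) has exactly four solutions, of the form
`±s₀, ±conj s₀` with `s₀` in the open first quadrant. -/
theorem stmt12 :
    ∃ s₀ : ℂ, 0 < s₀.re ∧ 0 < s₀.im ∧
      ∀ a : ℂ,
        (∃ s : ℂ, s ^ 2 = a ^ 2 - 3 ∧
          ((-a - s) / 3) ^ 3 + a * ((-a - s) / 3) ^ 2 + (-a - s) / 3 = (-a + s) / 3) ↔
        (a = s₀ ∨ a = -s₀ ∨ a = (starRingEnd ℂ) s₀ ∨ a = -((starRingEnd ℂ) s₀)) := by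
  have hw : 0 < ((45 + 5 * Real.sqrt 15 * I) / 16 : ℂ).im := by
    simp only [div_ofNat_im, add_im, mul_im, ofReal_re, ofReal_im, I_re, I_im]
    norm_num
  obtain ⟨s₀, hs₀, hre, him⟩ := exists_sq_eq_re_pos_im_pos hw
  refine ⟨s₀, hre, him, fun a => ?_⟩
  rw [critical_value_eq_iff, biquadratic_factor hs₀]
  simp only [mul_eq_zero, sub_eq_zero, add_eq_zero_iff_eq_neg, OfNat.ofNat_ne_zero, false_or,
    or_assoc]
end

section
/- For each fixed n ≥ 0 and each k ≥ 1, the set of parameters a ∈ ℂ for which f_a^{n+1}(c₋(a)) = 0 but f_a^n(c₋(a)) ≠ 0 is finite. -/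
open Polynomial

noncomputable def Fpoly : ℕ → Polynomial (Polynomial ℂ)
  | 0 => X
  | k+1 => (Fpoly k)^3 + C X * (Fpoly k)^2 + Fpoly k

noncomputable def qpoly : Polynomial (Polynomial ℂ) :=
  X^2 + C (C (2/3 : ℂ) * X) * X + C (C (1/3 : ℂ))

lemma ev_F (a c : ℂ) : ∀ k, eval₂ (evalRingHom a) c (Fpoly k) =
    (fun z : ℂ => z ^ 3 + a * z ^ 2 + z)^[k] c
  | 0 => by simp [Fpoly]
  | (k+1) => by
    rw [Function.iterate_succ_apply']
    simp only [Fpoly, eval₂_add, eval₂_mul, eval₂_pow, eval₂_C, eval₂_X,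
      ev_F a c k, coe_evalRingHom, eval_X]

lemma qpoly_monic : qpoly.Monic := by unfold qpoly; monicity!

lemma key (n : ℕ) (a c : ℂ) (hc : 3*c^2 + 2*a*c + 1 = 0) :
    ((Fpoly (n+1) %ₘ qpoly).coeff 1).eval a * c + ((Fpoly (n+1) %ₘ qpoly).coeff 0).eval a
      = (fun z : ℂ => z ^ 3 + a * z ^ 2 + z)^[n+1] c := by
  have hq := qpoly_monic
  have hdeg : (Fpoly (n+1) %ₘ qpoly).degree ≤ 1 := by
    have h := degree_modByMonic_lt (Fpoly (n+1)) hq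
    have hq2 : qpoly.degree = 2 := by unfold qpoly; compute_degree!
    rw [hq2] at h
    exact Order.le_of_lt_succ h
  have hform := eq_X_add_C_of_degree_le_one hdeg
  have hdiv := modByMonic_add_div (Fpoly (n+1)) qpoly
  have hev := congrArg (eval₂RingHom (evalRingHom a) c) hdiv
  simp only [map_add, map_mul, coe_eval₂RingHom] at hev
  have hq0 : eval₂ (evalRingHom a) c qpoly = 0 := by
    simp only [qpoly, eval₂_add, eval₂_mul, eval₂_pow, eval₂_C, eval₂_X,
      coe_evalRingHom, eval_mul, eval_C, eval_X]
    linear_combination hc/3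
  rw [hq0, zero_mul, add_zero, ev_F a c (n+1)] at hev
  rw [← hev]
  conv_rhs => rw [hform]
  simp [eval₂_add, eval₂_mul, eval₂_C, eval₂_X, coe_evalRingHom]

lemma inv_step (z : ℂ) (t : ℝ) (h0 : 0 < t) (h1 : t < 1) (hz : z^2 = -(t:ℂ)^2) :
    ∃ s : ℝ, 0 < s ∧ s < 1 ∧ (z^3 + 0*z^2 + z)^2 = -(s:ℂ)^2 :=
  ⟨t - t^3, by nlinarith [mul_pos (mul_pos h0 (sub_pos.mpr h1)) (by linarith : (0:ℝ) < 1 + t)],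
    by nlinarith [pow_pos h0 3], by
    push_cast
    linear_combination (z^4 + (2 - (t:ℂ)^2)*z^2 + (1-(t:ℂ)^2)^2) * hz⟩

lemma iter_ne : ∀ (k : ℕ) (z : ℂ), (∃ t : ℝ, 0 < t ∧ t < 1 ∧ z^2 = -(t:ℂ)^2) →
    (fun z : ℂ => z^3 + 0*z^2 + z)^[k] z ≠ 0
  | 0, z, ⟨t, h0, _, hz⟩ => by
    simp only [Function.iterate_zero, id_eq]
    intro h
    rw [h] at hz
    have ht : (t:ℂ) ^ 2 = 0 := by linear_combination hz
    have ht2 : (t:ℂ) = 0 := by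
      exact pow_eq_zero_iff (by norm_num) |>.mp ht
    have : t = 0 := by exact_mod_cast ht2
    exact absurd this h0.ne'
  | (k+1), z, ⟨t, h0, h1, hz⟩ => by
    rw [Function.iterate_succ_apply]
    exact iter_ne k _ (inv_step z t h0 h1 hz)

/-- For each `n ≥ 0`, the set of parameters `a` for which a critical point `c` of
`f_a(z) = z^3 + a z^2 + z` satisfies `f_a^{n+1}(c) = 0` but `f_a^n(c) ≠ 0` is finite. -/
theorem stmt14 (n : ℕ) :
    {a : ℂ | ∃ c : ℂ, 3 * c ^ 2 + 2 * a * c + 1 = 0 ∧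
      (fun z : ℂ => z ^ 3 + a * z ^ 2 + z)^[n + 1] c = 0 ∧
      (fun z : ℂ => z ^ 3 + a * z ^ 2 + z)^[n] c ≠ 0}.Finite := by
  set r0 : Polynomial ℂ := (Fpoly (n+1) %ₘ qpoly).coeff 0 with hr0
  set r1 : Polynomial ℂ := (Fpoly (n+1) %ₘ qpoly).coeff 1 with hr1
  set N : Polynomial ℂ := 3*r0^2 - 2*X*r0*r1 + r1^2 with hN
  have hNeval : ∀ a : ℂ, N.eval a =
      3*(r0.eval a)^2 - 2*a*(r0.eval a)*(r1.eval a) + (r1.eval a)^2 := by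
    intro a; simp [hN]
  have hN0 : N ≠ 0 := by
    intro h
    set c : ℂ := Complex.I / (Real.sqrt 3 : ℝ) with hcdef
    have h3 : ((Real.sqrt 3 : ℝ) : ℂ)^2 = 3 := by
      norm_cast
      exact Real.sq_sqrt (by norm_num)
    have h3ne : ((Real.sqrt 3 : ℝ) : ℂ) ≠ 0 := by
      intro hh; rw [hh] at h3; norm_num at h3
    have hc2 : c^2 = -(1/3 : ℂ) := by
      rw [hcdef, div_pow, Complex.I_sq, h3]; norm_num
    have hsq3 : (1:ℝ) < Real.sqrt 3 := by
      have : Real.sqrt 1 < Real.sqrt 3 := Real.sqrt_lt_sqrt (by norm_num) (by norm_num)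
      simpa using this
    have hinv : ∀ z : ℂ, z^2 = -(1/3 : ℂ) →
        ∃ t : ℝ, 0 < t ∧ t < 1 ∧ z^2 = -(t:ℂ)^2 := by
      intro z hz
      refine ⟨(Real.sqrt 3)⁻¹, by positivity, ?_, ?_⟩
      · exact inv_lt_one_of_one_lt₀ hsq3
      · rw [hz]
        push_cast
        rw [inv_pow, h3]
        norm_num
    have hc0 : 3*c^2 + 2*(0:ℂ)*c + 1 = 0 := by rw [hc2]; ring
    have hc0' : 3*(-c)^2 + 2*(0:ℂ)*(-c) + 1 = 0 := by
      rw [neg_pow]; simpa using hc0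
    have hk1 := key n 0 c hc0
    have hk2 := key n 0 (-c) hc0'
    have hne1 : r1.eval 0 * c + r0.eval 0 ≠ 0 := by
      rw [hk1]
      have := iter_ne (n+1) c (hinv c hc2)
      simpa using this
    have hne2 : r1.eval 0 * (-c) + r0.eval 0 ≠ 0 := by
      rw [hk2]
      have := iter_ne (n+1) (-c) (hinv (-c) (by rw [neg_pow]; simpa using hc2))
      simpa using this
    have hval : N.eval 0 = 3*(r0.eval 0)^2 + (r1.eval 0)^2 := by
      rw [hNeval 0]; ring
    have heq : N.eval 0 =
        3*((r1.eval 0 * c + r0.eval 0) * (r1.eval 0 * (-c) + r0.eval 0)) := by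
      rw [hval]; linear_combination 3*(r1.eval 0)^2 * hc2
    rw [h] at heq
    simp only [eval_zero] at heq
    exact absurd heq.symm
      (mul_ne_zero three_ne_zero (mul_ne_zero hne1 hne2))
  refine (Polynomial.finite_setOf_isRoot hN0).subset ?_
  rintro a ⟨c, hc, h1, -⟩
  have hk := key n a c hc
  rw [h1] at hk
  show N.IsRoot a
  rw [IsRoot, hNeval a]
  linear_combination (r1.eval a)^2 * hc +
    (3*(r0.eval a) - 3*(r1.eval a)*c - 2*a*(r1.eval a)) * hk
end

section
/- Uniqueness of conjugacy of expanding circle maps: if f₁, f₂ : S¹ → S¹ are weakly expanding maps of degree d ≥ 2 and α₁, α₂ are fixed points of f₁, f₂ respectively, then there is at most one orientation-preserving homeomorphism h : S¹ → S¹ with h ∘ f₁ = f₂ ∘ h and h(α₁) = α₂. -/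
/-- The circle `ℝ/ℤ`. -/
abbrev S1 := AddCircle (1 : ℝ)

/-- `f : S¹ → S¹` has degree `d` if it lifts to a continuous map `F : ℝ → ℝ`
with `F(x+1) = F(x) + d`. -/
def HasDegree (f : S1 → S1) (d : ℤ) : Prop :=
  ∃ F : ℝ → ℝ, Continuous F ∧ (∀ x : ℝ, F (x + 1) = F x + d) ∧
    ∀ x : ℝ, f (x : S1) = ((F x : ℝ) : S1)

/-- `f` is weakly expanding: every nondegenerate closed arc eventually covers the
whole circle under iteration. -/
def WeaklyExpanding (f : S1 → S1) : Prop :=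
  ∀ s : Set S1, IsClosed s → IsConnected s → s.Nontrivial →
    ∃ N : ℕ, f^[N] '' s = Set.univ

/-- A homeomorphism of the circle is orientation preserving if it lifts to a
strictly increasing continuous map of `ℝ`. -/
def OrientationPreservingHomeo (h : S1 ≃ₜ S1) : Prop :=
  ∃ H : ℝ → ℝ, StrictMono H ∧ Continuous H ∧ ∀ x : ℝ, h (x : S1) = ((H x : ℝ) : S1)

open Filter Topology Set


private lemma S1_coe_eq_coe {x y : ℝ} : (x : S1) = (y : S1) ↔ ∃ k : ℤ, y = x + k := by
  constructor
  · intro hxy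
    have h0 : ((y - x : ℝ) : S1) = 0 := by
      have h1 : ((y : ℝ) : S1) - ((x : ℝ) : S1) = 0 := by rw [hxy]; simp
      rwa [← AddCircle.coe_sub] at h1
    rw [AddCircle.coe_eq_zero_iff] at h0
    obtain ⟨n, hn⟩ := h0
    exact ⟨n, by rw [zsmul_eq_mul, mul_one] at hn; linarith⟩
  · rintro ⟨k, rfl⟩
    have h1 : ((x + k : ℝ) : S1) = (x : S1) + ((k : ℝ) : S1) := by rw [AddCircle.coe_add]
    rw [h1]
    have h2 : ((k : ℝ) : S1) = 0 := by
      rw [AddCircle.coe_eq_zero_iff]; exact ⟨k, by simp⟩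
    rw [h2, add_zero]

/-- A strictly monotone continuous lift of an injective circle map satisfies `H (x+1) = H x + 1`. -/
private lemma homeo_lift_one {e : S1 → S1} (hinj : Function.Injective e) {H : ℝ → ℝ}
    (hmono : StrictMono H) (hcont : Continuous H)
    (hlift : ∀ x : ℝ, e (x : S1) = ((H x : ℝ) : S1)) :
    ∀ x, H (x + 1) = H x + 1 := by
  intro x
  have h1 : ((H (x + 1) : ℝ) : S1) = ((H x : ℝ) : S1) := by
    rw [← hlift, ← hlift]
    congr 1
    exact (S1_coe_eq_coe.mpr ⟨1, by push_cast; ring⟩).symm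
  obtain ⟨k, hk⟩ := S1_coe_eq_coe.mp h1
  -- hk : H x = H (x + 1) + k
  have hlt : H x < H (x + 1) := hmono (by linarith)
  have hkneg : (k : ℝ) < 0 := by linarith
  by_contra hne
  have hk2 : (k : ℝ) ≤ -2 := by
    have hk1 : k ≤ -1 := by
      have : k < 0 := by exact_mod_cast hkneg
      omega
    have : k ≠ -1 := by
      intro he
      rw [he] at hk; push_cast at hk
      exact hne (by linarith)
    have : k ≤ -2 := by omega
    exact_mod_cast this
  have hmem : H x + 1 ∈ Icc (H x) (H (x + 1)) := ⟨by linarith, by linarith⟩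
  obtain ⟨x₁, hx₁, hHx₁⟩ :=
    intermediate_value_Icc (by linarith : x ≤ x + 1) hcont.continuousOn hmem
  have heq : e ((x₁ : ℝ) : S1) = e ((x : ℝ) : S1) := by
    rw [hlift, hlift, hHx₁]
    exact (S1_coe_eq_coe.mpr ⟨1, by ring⟩).symm
  obtain ⟨k', hk'⟩ := S1_coe_eq_coe.mp (hinj heq)
  -- hk' : x = x₁ + k'
  have hne1 : x₁ ≠ x := fun he' => by rw [he'] at hHx₁; linarith
  have hne2 : x₁ ≠ x + 1 := fun he' => by rw [he'] at hHx₁; linarith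
  have h1' : x < x₁ := lt_of_le_of_ne hx₁.1 (Ne.symm hne1)
  have h2' : x₁ < x + 1 := lt_of_le_of_ne hx₁.2 hne2
  have hz1 : k' < 0 := by
    have : (k' : ℝ) < 0 := by linarith
    exact_mod_cast this
  have hz2 : (-1 : ℤ) < k' := by
    have : (-1 : ℝ) < (k' : ℝ) := by linarith
    exact_mod_cast this
  omega

private lemma shift_int {f : ℝ → ℝ} {c : ℝ} (hf : ∀ x, f (x + 1) = f x + c) :
    ∀ (x : ℝ) (n : ℤ), f (x + n) = f x + n * c := by
  intro x n
  induction n using Int.induction_on with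
  | zero => simp
  | succ k ih =>
      have he : (x + ((k : ℤ) + 1 : ℤ) : ℝ) = (x + (k : ℤ)) + 1 := by push_cast; ring
      rw [he, hf, ih]; push_cast; ring
  | pred k ih =>
      push_cast at ih ⊢
      have key := hf (x + (-(k : ℝ) - 1))
      have e1 : x + (-(k : ℝ) - 1) + 1 = x + -(k : ℝ) := by ring
      rw [e1, ih] at key
      linarith [key]

private lemma orbit_tendsto_sup {K : ℝ → ℝ} (hKc : Continuous K) (hKm : StrictMono K)
    {a b t : ℝ} (hKa : K a = a) (hKb : K b = b) (ht : t ∈ Ioo a b)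
    (hsign : ∀ s ∈ Ioo a b, s < K s) :
    Tendsto (fun n => K^[n] t) atTop (𝓝 b) := by
  have hmem : ∀ n, K^[n] t ∈ Ioo a b := by
    intro n; induction n with
    | zero => simpa using ht
    | succ n ih =>
        rw [Function.iterate_succ_apply']
        exact ⟨by calc a = K a := hKa.symm
                  _ < K (K^[n] t) := hKm ih.1,
               by calc K (K^[n] t) < K b := hKm ih.2
                  _ = b := hKb⟩
  have hmono : Monotone fun n => K^[n] t :=
    monotone_nat_of_le_succ fun n => by
      rw [Function.iterate_succ_apply']
      exact (hsign _ (hmem n)).le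
  have hbdd : BddAbove (range fun n => K^[n] t) :=
    ⟨b, by rintro y ⟨n, rfl⟩; exact (hmem n).2.le⟩
  have hT := tendsto_atTop_ciSup hmono hbdd
  set L := ⨆ n, K^[n] t with hL
  have hfix : K L = L := by
    have h1 : Tendsto (fun n => K (K^[n] t)) atTop (𝓝 (K L)) :=
      (hKc.tendsto L).comp hT
    have h2 : Tendsto (fun n => K^[n + 1] t) atTop (𝓝 L) :=
      hT.comp (tendsto_add_atTop_nat 1)
    have h3 : (fun n => K (K^[n] t)) = fun n => K^[n + 1] t :=
      funext fun n => (Function.iterate_succ_apply' K n t).symm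
    exact tendsto_nhds_unique (h3 ▸ h1) h2
  have hLb : L ≤ b := ciSup_le fun n => (hmem n).2.le
  have haL : a < L := lt_of_lt_of_le ht.1 (by simpa using le_ciSup hbdd 0)
  have hLeq : L = b := by
    rcases eq_or_lt_of_le hLb with h | h
    · exact h
    · exact absurd hfix (ne_of_gt (hsign L ⟨haL, h⟩))
  rwa [hLeq] at hT

private lemma orbit_tendsto_inf {K : ℝ → ℝ} (hKc : Continuous K) (hKm : StrictMono K)
    {a b t : ℝ} (hKa : K a = a) (hKb : K b = b) (ht : t ∈ Ioo a b)
    (hsign : ∀ s ∈ Ioo a b, K s < s) :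
    Tendsto (fun n => K^[n] t) atTop (𝓝 a) := by
  have hmem : ∀ n, K^[n] t ∈ Ioo a b := by
    intro n; induction n with
    | zero => simpa using ht
    | succ n ih =>
        rw [Function.iterate_succ_apply']
        exact ⟨by calc a = K a := hKa.symm
                  _ < K (K^[n] t) := hKm ih.1,
               by calc K (K^[n] t) < K b := hKm ih.2
                  _ = b := hKb⟩
  have hmono : Antitone fun n => K^[n] t :=
    antitone_nat_of_succ_le fun n => by
      rw [Function.iterate_succ_apply']
      exact (hsign _ (hmem n)).le
  have hbdd : BddBelow (range fun n => K^[n] t) :=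
    ⟨a, by rintro y ⟨n, rfl⟩; exact (hmem n).1.le⟩
  have hT := tendsto_atTop_ciInf hmono hbdd
  set L := ⨅ n, K^[n] t with hL
  have hfix : K L = L := by
    have h1 : Tendsto (fun n => K (K^[n] t)) atTop (𝓝 (K L)) :=
      (hKc.tendsto L).comp hT
    have h2 : Tendsto (fun n => K^[n + 1] t) atTop (𝓝 L) :=
      hT.comp (tendsto_add_atTop_nat 1)
    have h3 : (fun n => K (K^[n] t)) = fun n => K^[n + 1] t :=
      funext fun n => (Function.iterate_succ_apply' K n t).symm
    exact tendsto_nhds_unique (h3 ▸ h1) h2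
  have hLa : a ≤ L := le_ciInf fun n => (hmem n).1.le
  have hLt : L < b := lt_of_le_of_lt (by simpa using ciInf_le hbdd 0) ht.2
  have hLeq : L = a := by
    rcases eq_or_lt_of_le hLa with h | h
    · exact h.symm
    · exact absurd hfix (ne_of_lt (hsign L ⟨h, hLt⟩))
  rwa [hLeq] at hT

private lemma master (d : ℤ) (hd : 2 ≤ d) (K F : ℝ → ℝ)
    (hKc : Continuous K) (hKm : StrictMono K)
    (hK1 : ∀ x, K (x + 1) = K x + 1) (hK0 : K 0 = 0)
    (hFc : Continuous F) (hF1 : ∀ x, F (x + 1) = F x + d)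
    (hcomm : ∀ x, K (F x) = F (K x))
    (hexp : ∀ u v : ℝ, u < v → v - u < 1 →
      ∃ (N : ℕ) (m M : ℝ), 1 ≤ N ∧ m + 1 ≤ M ∧ Icc m M ⊆ F^[N] '' Icc u v)
    (t₀ : ℝ) : K t₀ = t₀ := by
  by_contra ht₀
  have hKint : ∀ (x : ℝ) (n : ℤ), K (x + n) = K x + n := by
    intro x n
    have := shift_int hK1 x n; rwa [mul_one] at this
  have hDint : ∀ n : ℤ, K (n : ℝ) = (n : ℝ) := by
    intro n
    have := hKint 0 n; rw [hK0] at this; simpa using this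
  have hDc : IsClosed {t : ℝ | K t = t} := isClosed_eq hKc continuous_id
  -- the gap around t₀
  have hne1 : ((⌊t₀⌋ : ℝ)) ∈ {t : ℝ | K t = t} ∩ Iic t₀ := ⟨hDint ⌊t₀⌋, Int.floor_le t₀⟩
  have hbdd1 : BddAbove ({t : ℝ | K t = t} ∩ Iic t₀) := ⟨t₀, fun y hy => hy.2⟩
  set a := sSup ({t : ℝ | K t = t} ∩ Iic t₀) with ha
  have haD : a ∈ {t : ℝ | K t = t} ∩ Iic t₀ :=
    (hDc.inter isClosed_Iic).csSup_mem ⟨_, hne1⟩ hbdd1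
  have hKa : K a = a := haD.1
  have hat : a < t₀ := lt_of_le_of_ne haD.2 (fun he => ht₀ (he ▸ hKa))
  have hne2 : ((⌊t₀⌋ : ℝ) + 1) ∈ {t : ℝ | K t = t} ∩ Ici t₀ := by
    constructor
    · have := hDint (⌊t₀⌋ + 1); push_cast at this; simpa using this
    · exact (Int.lt_floor_add_one t₀).le
  have hbdd2 : BddBelow ({t : ℝ | K t = t} ∩ Ici t₀) := ⟨t₀, fun y hy => hy.2⟩
  set b := sInf ({t : ℝ | K t = t} ∩ Ici t₀) with hb
  have hbD : b ∈ {t : ℝ | K t = t} ∩ Ici t₀ :=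
    (hDc.inter isClosed_Ici).csInf_mem ⟨_, hne2⟩ hbdd2
  have hKb : K b = b := hbD.1
  have htb : t₀ < b := lt_of_le_of_ne hbD.2 (fun he => ht₀ (he.symm ▸ hKb))
  have hba : b ≤ a + 1 := by
    have h1 : b ≤ (⌊t₀⌋ : ℝ) + 1 := csInf_le hbdd2 hne2
    have h2 : (⌊t₀⌋ : ℝ) ≤ a := le_csSup hbdd1 hne1
    linarith
  have hgap : ∀ s ∈ Ioo a b, K s ≠ s := by
    intro s hs hsD
    rcases le_or_gt s t₀ with hle | hlt
    · exact absurd (le_csSup hbdd1 ⟨hsD, hle⟩) (not_le.2 hs.1)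
    · exact absurd (csInf_le hbdd2 ⟨hsD, hlt.le⟩) (not_le.2 hs.2)
  have ht₀mem : t₀ ∈ Ioo a b := ⟨hat, htb⟩
  -- uniform convergence direction on the gap
  obtain ⟨c, hcab, hconv⟩ :
      ∃ c, (c = a ∨ c = b) ∧ ∀ t ∈ Ioo a b, Tendsto (fun n => K^[n] t) atTop (𝓝 c) := by
    have hIoosub : ∀ {z s : ℝ}, s ∈ Ioo a b → z ∈ uIcc s t₀ → z ∈ Ioo a b := by
      intro z s hs hz
      exact (ordConnected_Ioo.uIcc_subset hs ht₀mem) hz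
    rcases lt_or_gt_of_ne ht₀ with hlt | hgt
    · refine ⟨a, Or.inl rfl, fun t htm => ?_⟩
      refine orbit_tendsto_inf hKc hKm hKa hKb htm ?_
      intro s hsm
      rcases lt_trichotomy (K s) s with h | h | h
      · exact h
      · exact absurd h (hgap s hsm)
      · exfalso
        have hiv : (0 : ℝ) ∈ uIcc (K s - s) (K t₀ - t₀) := by
          rw [mem_uIcc]; right; constructor <;> linarith
        obtain ⟨z, hz, hz0⟩ :=
          intermediate_value_uIcc (f := fun x => K x - x)
            ((hKc.sub continuous_id).continuousOn) hiv
        exact hgap z (hIoosub hsm hz) (by dsimp at hz0; linarith)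
    · refine ⟨b, Or.inr rfl, fun t htm => ?_⟩
      refine orbit_tendsto_sup hKc hKm hKa hKb htm ?_
      intro s hsm
      rcases lt_trichotomy s (K s) with h | h | h
      · exact h
      · exact absurd h.symm (hgap s hsm)
      · exfalso
        have hiv : (0 : ℝ) ∈ uIcc (K s - s) (K t₀ - t₀) := by
          rw [mem_uIcc]; left; constructor <;> linarith
        obtain ⟨z, hz, hz0⟩ :=
          intermediate_value_uIcc (f := fun x => K x - x)
            ((hKc.sub continuous_id).continuousOn) hiv
        exact hgap z (hIoosub hsm hz) (by dsimp at hz0; linarith)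
  have hKc' : K c = c := by rcases hcab with rfl | rfl; exacts [hKa, hKb]
  -- expansion applied to the left half of the gap
  have hab : a < b := lt_trans hat htb
  obtain ⟨N, m, M, hN1, hmM, hsub⟩ :=
    hexp a (a + (b - a) / 2) (by linarith) (by linarith)
  have hGcont : Continuous (F^[N]) := hFc.iterate N
  have hFint : ∀ (x : ℝ) (n : ℤ), F (x + n) = F x + n * d := shift_int hF1
  have hGshift : ∀ (n : ℕ) (x : ℝ), F^[n] (x + 1) = F^[n] x + (d : ℝ) ^ n := by
    intro n
    induction n with
    | zero => simp
    | succ n ih =>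
        intro x
        rw [Function.iterate_succ_apply', Function.iterate_succ_apply', ih]
        have h2 := hFint (F^[n] x) (d ^ n)
        push_cast at h2
        rw [h2]; ring
  have hcommKF : Function.Commute K F := fun y => hcomm y
  have hKG : ∀ (n : ℕ) (x : ℝ), K^[n] (F^[N] x) = F^[N] (K^[n] x) := by
    intro n x
    exact ((hcommKF.iterate_right N).iterate_left n) x
  have hKn1 : ∀ (n : ℕ) (y : ℝ), K^[n] (y + 1) = K^[n] y + 1 := by
    intro n
    induction n with
    | zero => simp
    | succ n ih => intro y; rw [Function.iterate_succ_apply', Function.iterate_succ_apply', ih, hK1]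
  have hGaD : K (F^[N] a) = F^[N] a := by
    have h1 := hKG 1 a
    simp only [Function.iterate_one] at h1
    rw [h1, hKa]
  have hmain : ∀ s ∈ Icc m M,
      Tendsto (fun n => K^[n] s) atTop (𝓝 (F^[N] c)) ∨ s = F^[N] a := by
    intro s hs
    obtain ⟨t, htv, rfl⟩ := hsub hs
    rcases eq_or_lt_of_le htv.1 with he | hat'
    · exact Or.inr (by rw [← he])
    · left
      have htIoo : t ∈ Ioo a b := ⟨hat', by rcases htv with ⟨_, h2⟩; linarith⟩
      have h1 := (hGcont.tendsto c).comp (hconv t htIoo)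
      have h2 : (fun n => F^[N] (K^[n] t)) = fun n => K^[n] (F^[N] t) :=
        funext fun n => (hKG n t).symm
      rw [show ((F^[N]) ∘ (fun n => K^[n] t)) = fun n => F^[N] (K^[n] t) from rfl, h2] at h1
      exact h1
  have Tfix : ∀ s : ℝ, K s = s → Tendsto (fun n => K^[n] s) atTop (𝓝 s) := by
    intro s hs
    have he : (fun n => K^[n] s) = fun _ => s := funext fun n => Function.iterate_fixed hs n
    rw [he]; exact tendsto_const_nhds
  have Tshift : ∀ (s L : ℝ), Tendsto (fun n => K^[n] s) atTop (𝓝 L) →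
      Tendsto (fun n => K^[n] (s + 1)) atTop (𝓝 (L + 1)) := by
    intro s L hT
    have he : (fun n => K^[n] (s + 1)) = fun n => K^[n] s + 1 := funext fun n => hKn1 n s
    rw [he]
    exact hT.add tendsto_const_nhds
  have pair : ∀ s, s ∈ Icc m M → s + 1 ∈ Icc m M → s ≠ F^[N] a → s + 1 ≠ F^[N] a → False := by
    intro s h1 h2 h3 h4
    have T1 := (hmain s h1).resolve_right h3
    have T2 := (hmain (s + 1) h2).resolve_right h4
    have := tendsto_nhds_unique T2 (Tshift s _ T1)
    linarith
  -- the two possible shapes of [m, M]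
  rcases eq_or_lt_of_le hmM with hM | hM
  · -- M = m + 1
    have hdN2 : (2 : ℝ) ≤ (d : ℝ) ^ N := by
      have h1 : (2 : ℝ) ≤ (d : ℝ) := by exact_mod_cast hd
      calc (2 : ℝ) ≤ (d : ℝ) := h1
        _ ≤ (d : ℝ) ^ N := le_self_pow₀ (by linarith) (by omega)
    -- if the open interval (m, m+1) has no fixed points, then b = a + 1
    have hb1 : (∀ s ∈ Ioo m (m + 1), K s ≠ s) → b = a + 1 := by
      intro hgap2
      have hmZ : ∃ k : ℤ, m = (k : ℝ) := by
        by_contra hnk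
        push_neg at hnk
        have h1 : m < (⌈m⌉ : ℝ) :=
          lt_of_le_of_ne (Int.le_ceil m) (fun he => hnk ⌈m⌉ he)
        have h2 : (⌈m⌉ : ℝ) < m + 1 := Int.ceil_lt_add_one m
        exact hgap2 _ ⟨h1, h2⟩ (hDint ⌈m⌉)
      obtain ⟨k, hk⟩ := hmZ
      have hDZ : ∀ s : ℝ, K s = s → ∃ j : ℤ, s = (j : ℝ) := by
        intro s hsD
        by_contra hns
        push_neg at hns
        have h1 : (⌊s⌋ : ℝ) < s :=
          lt_of_le_of_ne (Int.floor_le s) (fun he => hns ⌊s⌋ he.symm)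
        have h2 : s < (⌊s⌋ : ℝ) + 1 := Int.lt_floor_add_one s
        have hs'D : K (s + ((k - ⌊s⌋ : ℤ) : ℝ)) = s + ((k - ⌊s⌋ : ℤ) : ℝ) := by
          rw [hKint s (k - ⌊s⌋), hsD]
        refine hgap2 (s + ((k - ⌊s⌋ : ℤ) : ℝ)) ?_ hs'D
        rw [hk]
        push_cast
        constructor <;> linarith
      obtain ⟨ja, hja⟩ := hDZ a hKa
      obtain ⟨jb, hjb⟩ := hDZ b hKb
      rw [hja, hjb] at hab hba ⊢
      have e1 : ja < jb := by exact_mod_cast hab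
      have e2 : jb ≤ ja + 1 := by exact_mod_cast hba
      have e3 : jb = ja + 1 := by omega
      rw [e3]; push_cast; ring
    by_cases hGam : F^[N] a = m
    · have hTm1 : Tendsto (fun n => K^[n] (m + 1)) atTop (𝓝 (F^[N] c)) := by
        refine (hmain (m + 1) ⟨by linarith, by linarith⟩).resolve_right ?_
        rw [hGam]; intro hcon; linarith
      have hTfixm : Tendsto (fun n => K^[n] m) atTop (𝓝 m) := Tfix m (hGam ▸ hGaD)
      have hGc1 : F^[N] c = m + 1 := tendsto_nhds_unique hTm1 (Tshift m m hTfixm)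
      have hgap2 : ∀ s ∈ Ioo m (m + 1), K s ≠ s := by
        intro s hs hsD
        have h1 := (hmain s ⟨hs.1.le, by linarith [hs.2]⟩).resolve_right ?_
        · have h2 := tendsto_nhds_unique h1 (Tfix s hsD)
          rw [hGc1] at h2
          linarith [hs.2]
        · intro he; rw [he, hGam] at hs; exact absurd hs.1 (lt_irrefl m)
      have hb := hb1 hgap2
      have hGb : F^[N] b = F^[N] a + (d : ℝ) ^ N := by rw [hb]; exact hGshift N a
      rcases hcab with rfl | rfl
      · rw [hGam] at hGc1; linarith
      · rw [hGb, hGam] at hGc1; linarith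
    · by_cases hGaM : F^[N] a = m + 1
      · have hTm : Tendsto (fun n => K^[n] m) atTop (𝓝 (F^[N] c)) := by
          refine (hmain m ⟨le_refl m, by linarith⟩).resolve_right ?_
          rw [hGaM]; intro hcon; linarith
        have hTfix1 : Tendsto (fun n => K^[n] (m + 1)) atTop (𝓝 (m + 1)) :=
          Tfix (m + 1) (hGaM ▸ hGaD)
        have hGc0 := tendsto_nhds_unique (Tshift m _ hTm) hTfix1
        have hGc1 : F^[N] c = m := by linarith
        have hgap2 : ∀ s ∈ Ioo m (m + 1), K s ≠ s := by
          intro s hs hsD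
          have h1 := (hmain s ⟨hs.1.le, by linarith [hs.2]⟩).resolve_right ?_
          · have h2 := tendsto_nhds_unique h1 (Tfix s hsD)
            rw [hGc1] at h2
            linarith [hs.1]
          · intro he; rw [he, hGaM] at hs; exact absurd hs.2 (lt_irrefl (m + 1))
        have hb := hb1 hgap2
        have hGb : F^[N] b = F^[N] a + (d : ℝ) ^ N := by rw [hb]; exact hGshift N a
        rcases hcab with rfl | rfl
        · rw [hGaM] at hGc1; linarith
        · rw [hGb, hGaM] at hGc1; linarith
      · exact pair m ⟨le_refl m, by linarith⟩ ⟨by linarith, by linarith⟩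
          (fun he => hGam he.symm) (fun he => hGaM he.symm)
  · -- m + 1 < M : find a good point s in [m, M-1]
    have hex : ∃ s, s ∈ Icc m (M - 1) ∧ s ≠ F^[N] a ∧ s + 1 ≠ F^[N] a := by
      by_cases e1 : m ≠ F^[N] a ∧ m + 1 ≠ F^[N] a
      · exact ⟨m, ⟨le_refl m, by linarith⟩, e1.1, e1.2⟩
      · by_cases e2 : (m + (M - 1)) / 2 ≠ F^[N] a ∧ (m + (M - 1)) / 2 + 1 ≠ F^[N] a
        · exact ⟨(m + (M - 1)) / 2, ⟨by linarith, by linarith⟩, e2.1, e2.2⟩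
        · refine ⟨M - 1, ⟨by linarith, le_refl _⟩, ?_, ?_⟩ <;>
          · push_neg at e1 e2
            intro hcon
            rcases Classical.em (m = F^[N] a) with f1 | f1
            · rcases Classical.em ((m + (M - 1)) / 2 = F^[N] a) with f2 | f2
              · linarith [f1, f2]
              · have := e2 f2; linarith [f1, this]
            · have h1 := e1 f1
              rcases Classical.em ((m + (M - 1)) / 2 = F^[N] a) with f2 | f2
              · linarith [h1, f2]
              · have := e2 f2; linarith [h1, this]
    obtain ⟨s, hsIcc, hs1, hs2⟩ := hex
    exact pair s ⟨hsIcc.1, by linarith [hsIcc.2]⟩ ⟨by linarith [hsIcc.1], by linarith [hsIcc.2]⟩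
      hs1 hs2

/-- Uniqueness of the conjugacy between weakly expanding circle maps of degree
`d ≥ 2` sending a fixed point to a fixed point. -/
theorem stmt16 (d : ℤ) (hd : 2 ≤ d) (f₁ f₂ : S1 → S1)
    (hc₁ : Continuous f₁) (hc₂ : Continuous f₂)
    (hdeg₁ : HasDegree f₁ d) (hdeg₂ : HasDegree f₂ d)
    (hexp₁ : WeaklyExpanding f₁) (hexp₂ : WeaklyExpanding f₂)
    (α₁ α₂ : S1) (hα₁ : f₁ α₁ = α₁) (hα₂ : f₂ α₂ = α₂)
    (h g : S1 ≃ₜ S1)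
    (hor : OrientationPreservingHomeo h) (gor : OrientationPreservingHomeo g)
    (hconj : ∀ x, h (f₁ x) = f₂ (h x)) (gconj : ∀ x, g (f₁ x) = f₂ (g x))
    (hfix : h α₁ = α₂) (gfix : g α₁ = α₂) : h = g := by
  classical
  obtain ⟨a1, ha1⟩ : ∃ x : ℝ, (x : S1) = α₁ := QuotientAddGroup.mk_surjective α₁
  obtain ⟨F₀, hF₀c, hF₀1, hF₀lift⟩ := hdeg₁
  have hcoeF : ((F₀ a1 : ℝ) : S1) = (a1 : S1) := by
    rw [← hF₀lift a1, ha1, hα₁]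
  obtain ⟨j, hj⟩ := S1_coe_eq_coe.mp hcoeF
  -- normalized projection and lift of f₁ fixing 0
  set p : ℝ → S1 := fun x => ((x + a1 : ℝ) : S1) with hpdef
  have hpc : Continuous p := (AddCircle.continuous_mk' 1).comp (continuous_add_right a1)
  have hpeq : ∀ {x y : ℝ}, p x = p y ↔ ∃ k : ℤ, y = x + k := by
    intro x y
    constructor
    · intro hpxy
      obtain ⟨k, hk⟩ := S1_coe_eq_coe.mp hpxy
      exact ⟨k, by linarith⟩
    · rintro ⟨k, rfl⟩
      exact S1_coe_eq_coe.mpr ⟨k, by ring⟩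
  have hp0 : p 0 = α₁ := by
    show ((0 + a1 : ℝ) : S1) = α₁
    rw [zero_add]; exact ha1
  have hpsurj : ∀ z : S1, ∃ x : ℝ, p x = z := by
    intro z
    obtain ⟨y, hy⟩ : ∃ y : ℝ, (y : S1) = z := QuotientAddGroup.mk_surjective z
    refine ⟨y - a1, ?_⟩
    show ((y - a1 + a1 : ℝ) : S1) = z
    rw [sub_add_cancel]; exact hy
  set F : ℝ → ℝ := fun x => F₀ (x + a1) + j - a1 with hFdef
  have hFc : Continuous F :=
    ((hF₀c.comp (continuous_add_right a1)).add continuous_const).sub continuous_const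
  have hF1 : ∀ x, F (x + 1) = F x + d := by
    intro x
    show F₀ (x + 1 + a1) + j - a1 = F₀ (x + a1) + j - a1 + d
    rw [show x + 1 + a1 = (x + a1) + 1 by ring, hF₀1]
    ring
  have hF0 : F 0 = 0 := by
    show F₀ (0 + a1) + j - a1 = 0
    rw [zero_add]; linarith [hj]
  have hplift : ∀ x, f₁ (p x) = p (F x) := by
    intro x
    show f₁ ((x + a1 : ℝ) : S1) = ((F₀ (x + a1) + j - a1 + a1 : ℝ) : S1)
    rw [hF₀lift]
    exact S1_coe_eq_coe.mpr ⟨j, by ring⟩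
  -- normalized lifts of h and g
  obtain ⟨H₀, hH₀m, hH₀c, hH₀lift⟩ := hor
  obtain ⟨G₀, hG₀m, hG₀c, hG₀lift⟩ := gor
  have hH₀1 : ∀ x, H₀ (x + 1) = H₀ x + 1 := homeo_lift_one h.injective hH₀m hH₀c hH₀lift
  have hG₀1 : ∀ x, G₀ (x + 1) = G₀ x + 1 := homeo_lift_one g.injective hG₀m hG₀c hG₀lift
  set Hl : ℝ → ℝ := fun x => H₀ (x + a1) - a1 with hHldef
  set Gl : ℝ → ℝ := fun x => G₀ (x + a1) - a1 with hGldef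
  have hHlm : StrictMono Hl := fun x y hxy =>
    sub_lt_sub_right (hH₀m (add_lt_add_left hxy a1)) a1
  have hGlm : StrictMono Gl := fun x y hxy =>
    sub_lt_sub_right (hG₀m (add_lt_add_left hxy a1)) a1
  have hHlc : Continuous Hl := (hH₀c.comp (continuous_add_right a1)).sub continuous_const
  have hGlc : Continuous Gl := (hG₀c.comp (continuous_add_right a1)).sub continuous_const
  have hHl1 : ∀ x, Hl (x + 1) = Hl x + 1 := by
    intro x
    show H₀ (x + 1 + a1) - a1 = H₀ (x + a1) - a1 + 1
    rw [show x + 1 + a1 = (x + a1) + 1 by ring, hH₀1]; ring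
  have hGl1 : ∀ x, Gl (x + 1) = Gl x + 1 := by
    intro x
    show G₀ (x + 1 + a1) - a1 = G₀ (x + a1) - a1 + 1
    rw [show x + 1 + a1 = (x + a1) + 1 by ring, hG₀1]; ring
  have hHllift : ∀ x, h (p x) = p (Hl x) := by
    intro x
    show h ((x + a1 : ℝ) : S1) = ((H₀ (x + a1) - a1 + a1 : ℝ) : S1)
    rw [hH₀lift]
    exact congrArg _ (by ring)
  have hGllift : ∀ x, g (p x) = p (Gl x) := by
    intro x
    show g ((x + a1 : ℝ) : S1) = ((G₀ (x + a1) - a1 + a1 : ℝ) : S1)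
    rw [hG₀lift]
    exact congrArg _ (by ring)
  -- inverse of the lift of g
  have hGlint : ∀ (x : ℝ) (n : ℤ), Gl (x + n) = Gl x + n := by
    intro x n
    have := shift_int hGl1 x n; rwa [mul_one] at this
  have hGlsurj : Function.Surjective Gl := by
    intro y
    obtain ⟨n, hn⟩ := exists_nat_ge (|y - Gl 0|)
    have e1 : Gl (0 + ((-(n : ℤ) : ℤ) : ℝ)) = Gl 0 + ((-(n : ℤ) : ℤ) : ℝ) := hGlint 0 (-(n : ℤ))
    have e2 : Gl (0 + ((n : ℤ) : ℝ)) = Gl 0 + ((n : ℤ) : ℝ) := hGlint 0 (n : ℤ)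
    push_cast at e1 e2
    have hmem : y ∈ Icc (Gl (0 + -(n : ℝ))) (Gl (0 + (n : ℝ))) := by
      rw [show Gl (0 + -(n:ℝ)) = Gl (-(n:ℝ)) by norm_num,
          show Gl (0 + (n:ℝ)) = Gl ((n:ℝ)) by norm_num] at *
      rw [e1, e2]
      constructor
      · linarith [(abs_le.mp hn).1]
      · linarith [(abs_le.mp hn).2]
    obtain ⟨x, _, hxe⟩ := intermediate_value_Icc
      (by have : (0:ℝ) ≤ n := Nat.cast_nonneg n; linarith : (0 : ℝ) + -(n:ℝ) ≤ 0 + (n:ℝ))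
      hGlc.continuousOn hmem
    exact ⟨x, hxe⟩
  set EG := StrictMono.orderIsoOfSurjective Gl hGlm hGlsurj with hEGdef
  have hEGcoe : ∀ x, EG x = Gl x := fun x =>
    congrFun (StrictMono.coe_orderIsoOfSurjective Gl hGlm hGlsurj) x
  set Gi : ℝ → ℝ := fun y => EG.symm y with hGidef
  have hGi1 : ∀ y, Gl (Gi y) = y := fun y => by
    show Gl (EG.symm y) = y
    rw [← hEGcoe]; exact EG.apply_symm_apply y
  have hGim : StrictMono Gi := EG.symm.strictMono
  have hGic : Continuous Gi := EG.symm.toHomeomorph.continuous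
  have hGishift : ∀ y, Gi (y + 1) = Gi y + 1 := by
    intro y
    apply hGlm.injective
    rw [hGi1]
    have e1 : Gl (Gi y + ((1:ℤ):ℝ)) = Gl (Gi y) + ((1:ℤ):ℝ) := hGlint (Gi y) 1
    push_cast at e1
    rw [e1, hGi1]
  have hGilift : ∀ y : ℝ, g.symm (p y) = p (Gi y) := by
    intro y
    apply g.injective
    have hthis := hGllift (Gi y)
    rw [hGi1] at hthis
    rw [g.apply_symm_apply]
    exact hthis.symm
  -- the normalized lift K of g⁻¹ ∘ h
  have hK₀lift : ∀ x, p (Gi (Hl x)) = g.symm (h (p x)) := fun x => by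
    rw [← hGilift, ← hHllift]
  have hsymm_fix : g.symm α₂ = α₁ := by rw [← gfix]; exact g.symm_apply_apply α₁
  have hK₀0 : p (Gi (Hl 0)) = p 0 := by
    rw [hK₀lift 0, hp0, hfix, hsymm_fix]
  obtain ⟨i, hi⟩ := hpeq.mp hK₀0
  set K : ℝ → ℝ := fun x => Gi (Hl x) + i with hKdef
  have hK0 : K 0 = 0 := by
    show Gi (Hl 0) + (i:ℝ) = 0
    linarith [hi]
  have hKm : StrictMono K := fun x y hxy => add_lt_add_left (hGim (hHlm hxy)) _
  have hKc : Continuous K := (hGic.comp hHlc).add continuous_const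
  have hK1 : ∀ x, K (x + 1) = K x + 1 := by
    intro x
    show Gi (Hl (x + 1)) + (i:ℝ) = Gi (Hl x) + i + 1
    rw [hHl1, hGishift]; ring
  have hKlift : ∀ x, p (K x) = g.symm (h (p x)) := by
    intro x
    show p (Gi (Hl x) + (i:ℝ)) = _
    rw [show p (Gi (Hl x) + (i:ℝ)) = p (Gi (Hl x)) from (hpeq.mpr ⟨i, rfl⟩).symm]
    exact hK₀lift x
  -- commutation K ∘ F = F ∘ K
  have hgsf : ∀ z, g.symm (f₂ z) = f₁ (g.symm z) := by
    intro z
    apply g.injective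
    calc g (g.symm (f₂ z)) = f₂ z := g.apply_symm_apply _
      _ = f₂ (g (g.symm z)) := by rw [g.apply_symm_apply]
      _ = g (f₁ (g.symm z)) := (gconj _).symm
  have hpcomm : ∀ x, p (K (F x)) = p (F (K x)) := by
    intro x
    rw [hKlift (F x), ← hplift x, hconj (p x), hgsf, ← hKlift x]
    exact hplift (K x)
  have hq : ∀ x, ∃ k : ℤ, F (K x) = K (F x) + k := fun x => hpeq.mp (hpcomm x)
  have hcommKF : ∀ x, K (F x) = F (K x) := by
    intro x
    obtain ⟨kx, hkx⟩ := hq x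
    rcases eq_or_ne kx 0 with rfl | hne
    · push_cast at hkx; linarith
    · exfalso
      set q : ℝ → ℝ := fun y => F (K y) - K (F y) with hqdef
      have hqc : Continuous q := (hFc.comp hKc).sub (hKc.comp hFc)
      have hqx : q x = kx := by
        show F (K x) - K (F x) = kx
        linarith [hkx]
      have hq0 : q 0 = 0 := by
        show F (K 0) - K (F 0) = 0
        rw [hK0, hF0, hK0]; ring
      rcases lt_or_gt_of_ne hne with hneg | hpos
      · have hkx1 : (kx : ℝ) ≤ -1 := by
          have : kx ≤ -1 := by omega
          exact_mod_cast this
        have hw : (-1/2 : ℝ) ∈ uIcc (q 0) (q x) := by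
          rw [hq0, hqx, mem_uIcc]; right
          constructor <;> linarith
        obtain ⟨z, _, hqz⟩ := intermediate_value_uIcc hqc.continuousOn hw
        obtain ⟨kz, hkz⟩ := hq z
        have hzv : (kz : ℝ) = -1/2 := by
          have : F (K z) - K (F z) = -1/2 := hqz
          linarith [hkz]
        have h2 : ((2 * kz : ℤ) : ℝ) = -1 := by push_cast; linarith
        have : (2 * kz : ℤ) = -1 := by exact_mod_cast h2
        omega
      · have hkx1 : (1 : ℝ) ≤ (kx : ℝ) := by
          have : 1 ≤ kx := by omega
          exact_mod_cast this
        have hw : (1/2 : ℝ) ∈ uIcc (q 0) (q x) := by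
          rw [hq0, hqx, mem_uIcc]; left
          constructor <;> linarith
        obtain ⟨z, _, hqz⟩ := intermediate_value_uIcc hqc.continuousOn hw
        obtain ⟨kz, hkz⟩ := hq z
        have hzv : (kz : ℝ) = 1/2 := by
          have : F (K z) - K (F z) = 1/2 := hqz
          linarith [hkz]
        have h2 : ((2 * kz : ℤ) : ℝ) = 1 := by push_cast; linarith
        have : (2 * kz : ℤ) = 1 := by exact_mod_cast h2
        omega
  have hcommKF' : ∀ x, K (F x) = F (K x) := hcommKF
  -- transfer of the expansion property
  have hpnotuniv : ∀ u' v' : ℝ, v' - u' < 1 → p '' Icc u' v' ≠ univ := by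
    intro u' v' hlt hcon
    have hmem : p (v' + (1 - (v' - u')) / 2) ∈ p '' Icc u' v' := by
      rw [hcon]; exact mem_univ _
    obtain ⟨t, htm, hte⟩ := hmem
    obtain ⟨k, hk⟩ := hpeq.mp hte
    have h1 : (0 : ℝ) < k := by
      have := htm.2
      linarith
    have h2 : (k : ℝ) < 1 := by
      have := htm.1
      linarith
    have h1' : (1 : ℤ) ≤ k := by
      have : (0 : ℤ) < k := by exact_mod_cast h1
      omega
    have : (1 : ℝ) ≤ (k : ℝ) := by exact_mod_cast h1'
    linarith
  have hexpF : ∀ u v : ℝ, u < v → v - u < 1 →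
      ∃ (N : ℕ) (m M : ℝ), 1 ≤ N ∧ m + 1 ≤ M ∧ Icc m M ⊆ F^[N] '' Icc u v := by
    intro u v huv huv1
    have hcl : IsClosed (p '' Icc u v) := (isCompact_Icc.image hpc).isClosed
    have hconn : IsConnected (p '' Icc u v) :=
      (isConnected_Icc huv.le).image p hpc.continuousOn
    have hnt : (p '' Icc u v).Nontrivial := by
      refine ⟨p u, mem_image_of_mem _ (left_mem_Icc.mpr huv.le),
        p ((u + v) / 2), mem_image_of_mem _ ⟨by linarith, by linarith⟩, ?_⟩
      intro he
      obtain ⟨k, hk⟩ := hpeq.mp he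
      have h1 : (0 : ℝ) < k := by linarith
      have h2 : (k : ℝ) < 1 := by linarith
      have h1' : (1 : ℤ) ≤ k := by
        have : (0 : ℤ) < k := by exact_mod_cast h1
        omega
      have : (1 : ℝ) ≤ (k : ℝ) := by exact_mod_cast h1'
      linarith
    obtain ⟨N, hN⟩ := hexp₁ _ hcl hconn hnt
    have hNlift : ∀ (n : ℕ) (x : ℝ), f₁^[n] (p x) = p (F^[n] x) := by
      intro n
      induction n with
      | zero => intro x; simp
      | succ n ih =>
          intro x
          rw [Function.iterate_succ_apply', Function.iterate_succ_apply', ih, hplift]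
    have himg : p '' (F^[N] '' Icc u v) = univ := by
      have hfe : (fun x : ℝ => p (F^[N] x)) = fun x : ℝ => f₁^[N] (p x) :=
        funext fun x => (hNlift N x).symm
      calc p '' (F^[N] '' Icc u v) = (fun x : ℝ => p (F^[N] x)) '' Icc u v := image_image _ _ _
        _ = (fun x : ℝ => f₁^[N] (p x)) '' Icc u v := by rw [hfe]
        _ = f₁^[N] '' (p '' Icc u v) := (image_image _ _ _).symm
        _ = univ := hN
    have hN1 : 1 ≤ N := by
      rcases Nat.eq_zero_or_pos N with rfl | hpos
      · rw [Function.iterate_zero, image_id] at hN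
        exact absurd hN (hpnotuniv u v huv1)
      · exact hpos
    have hGcont : Continuous (F^[N]) := hFc.iterate N
    obtain ⟨tm, htm, hmin⟩ :=
      isCompact_Icc.exists_isMinOn (nonempty_Icc.mpr huv.le) hGcont.continuousOn
    obtain ⟨tM, htM, hmax⟩ :=
      isCompact_Icc.exists_isMaxOn (nonempty_Icc.mpr huv.le) hGcont.continuousOn
    refine ⟨N, F^[N] tm, F^[N] tM, hN1, ?_, ?_⟩
    · by_contra hlt
      push_neg at hlt
      refine hpnotuniv (F^[N] tm) (F^[N] tM) (by linarith) ?_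
      apply eq_univ_of_univ_subset
      rw [← himg]
      apply image_mono
      rintro y ⟨x, hx, rfl⟩
      exact ⟨isMinOn_iff.mp hmin x hx, isMaxOn_iff.mp hmax x hx⟩
    · rcases le_total tm tM with hc | hc
      · intro y hy
        obtain ⟨z, hz, hze⟩ := intermediate_value_Icc hc hGcont.continuousOn hy
        exact ⟨z, Icc_subset_Icc htm.1 htM.2 hz, hze⟩
      · intro y hy
        obtain ⟨z, hz, hze⟩ := intermediate_value_Icc' hc hGcont.continuousOn hy
        exact ⟨z, Icc_subset_Icc htM.1 htm.2 hz, hze⟩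
  -- conclude via the master lemma
  have hKid : ∀ t, K t = t := fun t =>
    master d hd K F hKc hKm hK1 hK0 hFc hF1 hcommKF' hexpF t
  refine Homeomorph.ext fun z => ?_
  obtain ⟨x, rfl⟩ := hpsurj z
  have h1 : g.symm (h (p x)) = p x := by rw [← hKlift x, hKid x]
  calc h (p x) = g (g.symm (h (p x))) := (g.apply_symm_apply _).symm
    _ = g (p x) := by rw [h1]
end

section
/- For a real parameter a ∈ (2, ∞), the critical point c₋(a) = (-a - √(a²-3))/3 of f_a escapes to infinity under iteration of f_a, so real parameters a > 2 lie outside the connectedness locus. -/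
/-!
The critical value `v = f_a(c₋(a))` equals `(a + s)(a² + a s - 6)/27` with `s = √(a² - 3)`, which is
positive for `a > 2`. Since `f_a(x) ≥ x + x³`, on `[v, ∞)` we have `f_a(x) ≥ x + v³`, so from the
critical value on the orbit increases by at least `v³` at every step.
-/

open Filter

section Escape

variable {K : Type*} [Field K] [LinearOrder K] [IsStrictOrderedRing K]

theorem add_mul_le_iterate_of_forall_le_add {g : K → K} {x₀ δ : K} (hδ : 0 ≤ δ)
    (hg : ∀ x, x₀ ≤ x → x + δ ≤ g x) (n : ℕ) : x₀ + n * δ ≤ g^[n] x₀ := by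
  induction n with
  | zero => simp
  | succ n ih =>
    have hx₀ : x₀ ≤ g^[n] x₀ := le_trans (le_add_of_nonneg_right (by positivity)) ih
    rw [Function.iterate_succ_apply']
    push_cast
    linarith [hg _ hx₀]

theorem tendsto_iterate_atTop_of_forall_le_add [Archimedean K] {g : K → K} {x₀ δ : K}
    (hδ : 0 < δ) (hg : ∀ x, x₀ ≤ x → x + δ ≤ g x) :
    Tendsto (fun n => g^[n] x₀) atTop atTop :=
  tendsto_atTop_mono (add_mul_le_iterate_of_forall_le_add hδ.le hg)
    (tendsto_atTop_add_const_left _ _ (tendsto_natCast_atTop_atTop.atTop_mul_const hδ))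

end Escape

def cubicMap (a x : ℝ) : ℝ := x ^ 3 + a * x ^ 2 + x

theorem cubicMap_critical_value {a s : ℝ} (hs : s ^ 2 = a ^ 2 - 3) :
    cubicMap a ((-a - s) / 3) = (a + s) * (a ^ 2 + a * s - 6) / 27 := by
  unfold cubicMap
  linear_combination (-(a + s) / 27) * hs

theorem cubicMap_critical_value_pos {a : ℝ} (ha : 2 < a) :
    0 < cubicMap a ((-a - √(a ^ 2 - 3)) / 3) := by
  have hs : √(a ^ 2 - 3) ^ 2 = a ^ 2 - 3 := Real.sq_sqrt (by nlinarith)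
  have hs₁ : 1 < √(a ^ 2 - 3) := by nlinarith [Real.sqrt_nonneg (a ^ 2 - 3)]
  rw [cubicMap_critical_value hs]
  have : 0 < a ^ 2 + a * √(a ^ 2 - 3) - 6 := by nlinarith
  positivity

theorem add_pow_three_le_cubicMap {a : ℝ} (ha : 0 ≤ a) (x : ℝ) :
    x + x ^ 3 ≤ cubicMap a x := by
  unfold cubicMap
  nlinarith [mul_nonneg ha (sq_nonneg x)]

/-- For a real parameter `a > 2`, the critical point `c₋(a) = (-a - √(a²-3))/3`
of `f_a(x) = x^3 + a x^2 + x` escapes to infinity under iteration. -/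
theorem stmt18 (a : ℝ) (ha : 2 < a) :
    Filter.Tendsto
      (fun n : ℕ =>
        |(fun x : ℝ => x ^ 3 + a * x ^ 2 + x)^[n]
          ((-a - Real.sqrt (a ^ 2 - 3)) / 3)|)
      Filter.atTop Filter.atTop := by
  set c := (-a - √(a ^ 2 - 3)) / 3
  set v := cubicMap a c
  have hv : 0 < v := cubicMap_critical_value_pos ha
  have hstep : ∀ x, v ≤ x → x + v ^ 3 ≤ cubicMap a x := fun x hx =>
    (add_le_add_right (pow_le_pow_left₀ hv.le hx 3) x).trans
      (add_pow_three_le_cubicMap (by linarith) x)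
  have hescape : Tendsto (fun n => (cubicMap a)^[n + 1] c) atTop atTop := by
    simpa only [Function.iterate_succ_apply] using
      tendsto_iterate_atTop_of_forall_le_add (pow_pos hv 3) hstep
  exact tendsto_abs_atTop_atTop.comp ((tendsto_add_atTop_iff_nat 1).mp hescape)
end
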